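/- For every natural number d ≥ 1 and every real α with −1 ≤ α ≤ 1, one has H(1/2 − (1/2)·√(α² + (1 − α²)/d)) ≤ H((1/2)·(1 − 1/√d)), where H is the binary entropy function. (This yields the upper bound E_min(ℳ) ≤ H((1/2)(1 − 1/√d)) on the entanglement cost of any POVM on ℂ^d.) -/
import Mathlib

/-- The binary entropy function `H(x) = −x·log₂ x − (1−x)·log₂(1−x)`
(with `H(0) = H(1) = 0`, by the convention `logb 2 0 = 0`). -/
noncomputable def binH (x : ℝ) : ℝ :=
  -(x * Real.logb 2 x) - (1 - x) * Real.logb 2 (1 - x)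

lemma binH_eq (x : ℝ) : binH x = Real.binEntropy x / Real.log 2 := by
  unfold binH Real.binEntropy Real.logb
  rw [Real.log_inv, Real.log_inv]
  field_simp
  ring

/-- For every `d ≥ 1` and every `α ∈ [−1, 1]`,
`H(1/2 − (1/2)√(α² + (1−α²)/d)) ≤ H((1/2)(1 − 1/√d))`.  (This yields the dimensional
upper bound `E_min(ℳ) ≤ H((1/2)(1 − 1/√d))` on the entanglement cost of any POVM on
`ℂ^d`.) -/
theorem entanglement_cost_dimension_bound (d : ℕ) (hd : 1 ≤ d)
    (α : ℝ) (hα1 : -1 ≤ α) (hα2 : α ≤ 1) :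
    binH (1 / 2 - (1 / 2) * Real.sqrt (α ^ 2 + (1 - α ^ 2) / d)) ≤
      binH ((1 / 2) * (1 - 1 / Real.sqrt d)) := by
  have hd1 : (1 : ℝ) ≤ d := by exact_mod_cast hd
  have hd0 : (0 : ℝ) < d := by linarith
  have hα : α ^ 2 ≤ 1 := by nlinarith
  have hα0 : 0 ≤ α ^ 2 := sq_nonneg α
  -- the argument inside the sqrt
  have h1 : 1 / (d : ℝ) ≤ α ^ 2 + (1 - α ^ 2) / d := by
    rw [div_le_iff₀ hd0, add_mul, div_mul_cancel₀ _ (ne_of_gt hd0)]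
    nlinarith
  have h2 : α ^ 2 + (1 - α ^ 2) / d ≤ 1 := by
    have : (1 - α ^ 2) / d ≤ 1 - α ^ 2 := by
      rw [div_le_iff₀ hd0]; nlinarith
    linarith
  have hs1 : Real.sqrt (α ^ 2 + (1 - α ^ 2) / d) ≤ 1 := by
    exact Real.sqrt_le_one.mpr h2
  have hsinv : 1 / Real.sqrt d ≤ Real.sqrt (α ^ 2 + (1 - α ^ 2) / d) := by
    rw [show 1 / Real.sqrt d = Real.sqrt (1 / d) by
      rw [one_div, one_div, Real.sqrt_inv]]
    exact Real.sqrt_le_sqrt h1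
  have hsd1 : 1 / Real.sqrt d ≤ 1 := by
    rw [div_le_one (Real.sqrt_pos.mpr hd0)]
    rw [show (1:ℝ) = Real.sqrt 1 by simp]
    exact Real.sqrt_le_sqrt hd1
  have hsd0 : 0 ≤ 1 / Real.sqrt d := by positivity
  set x := 1 / 2 - (1 / 2) * Real.sqrt (α ^ 2 + (1 - α ^ 2) / d) with hx
  set y := (1 / 2) * (1 - 1 / Real.sqrt d) with hy
  have hx0 : 0 ≤ x := by rw [hx]; linarith
  have hxy : x ≤ y := by rw [hx, hy]; nlinarith
  have hy12 : y ≤ 2⁻¹ := by rw [hy]; nlinarith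
  rw [binH_eq, binH_eq]
  have hlog : (0:ℝ) < Real.log 2 := Real.log_pos (by norm_num)
  exact div_le_div_of_nonneg_right (Real.binEntropy_strictMonoOn.monotoneOn
    ⟨hx0, le_trans hxy hy12⟩ ⟨le_trans hx0 hxy, hy12⟩ hxy) hlog.le
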